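/- In a mixed graph G, two vertices a and b are connected by a pure-collider path if and only if district(a ∪ ch(a)) ∩ district(b ∪ ch(b)) ≠ ∅, where ch(v) denotes the set of children of v and district(S) denotes the set of vertices connected to some vertex of S by a (possibly empty) path of bi-directed edges. -/

import Mathlib

structure MixedGraph (V : Type*) where
  dir : V → V → Prop
  bi : V → V → Prop
  bi_symm : ∀ {a b : V}, bi a b → bi b a

namespace MixedGraph

variable {V : Type*}

/-- A single edge traversal: a directed edge traversed forwards (`a → b`),
a directed edge traversed backwards (`a ← b`), or a bi-directed edge (`a ↔ b`). -/
inductive Step (G : MixedGraph V) : V → V → Type _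
  | fwd {a b : V} : G.dir a b → G.Step a b
  | bwd {a b : V} : G.dir b a → G.Step a b
  | bi  {a b : V} : G.bi a b → G.Step a b

/-- The edge has an arrowhead at its second endpoint. -/
def Step.arrowAtEnd {G : MixedGraph V} : {a b : V} → G.Step a b → Prop
  | _, _, .fwd _ => True
  | _, _, .bwd _ => False
  | _, _, .bi _ => True

/-- The edge has an arrowhead at its first endpoint. -/
def Step.arrowAtStart {G : MixedGraph V} : {a b : V} → G.Step a b → Prop
  | _, _, .fwd _ => False
  | _, _, .bwd _ => True
  | _, _, .bi _ => True

/-- Paths (possibly self-intersecting) in a mixed graph. -/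
inductive Walk (G : MixedGraph V) : V → V → Type _
  | nil {a : V} : G.Walk a a
  | cons {a b c : V} : G.Step a b → G.Walk b c → G.Walk a c

namespace Walk

variable {G : MixedGraph V}

def length : {a b : V} → G.Walk a b → ℕ
  | _, _, .nil => 0
  | _, _, .cons _ w => w.length + 1

def verts : {a b : V} → G.Walk a b → List V
  | a, _, .nil => [a]
  | a, _, .cons _ w => a :: w.verts

/-- The intermediate vertices of a walk. -/
def interm {a b : V} (w : G.Walk a b) : List V := w.verts.tail.dropLast

def append : {a b c : V} → G.Walk a b → G.Walk b c → G.Walk a c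
  | _, _, _, .nil, w' => w'
  | _, _, _, .cons s w, w' => .cons s (w.append w')

/-- Every intermediate vertex of the walk is a collider. -/
def IsPureCollider : {a b : V} → G.Walk a b → Prop
  | _, _, .nil => True
  | _, _, .cons _ .nil => True
  | _, _, .cons s (.cons t w) =>
      s.arrowAtEnd ∧ t.arrowAtStart ∧ (Walk.cons t w).IsPureCollider

/-- The walk is m-connecting given `C`: every non-collider on it is outside `C`
and every collider on it is in `C`. -/
def IsMConnecting (C : Set V) : {a b : V} → G.Walk a b → Prop
  | _, _, .nil => True
  | _, _, .cons _ .nil => True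
  | _, _, .cons (b := m) s (.cons t w) =>
      ((s.arrowAtEnd ∧ t.arrowAtStart) ↔ m ∈ C) ∧ (Walk.cons t w).IsMConnecting C

end Walk

variable (G : MixedGraph V)

/-- `A` and `B` are m-separated given `C`: no m-connecting walk given `C`
between a vertex of `A` and a vertex of `B`. -/
def MSep (A B C : Set V) : Prop :=
  ∀ a ∈ A, ∀ b ∈ B, ∀ w : G.Walk a b, ¬ w.IsMConnecting C

/-- `u` and `v` are joined by a pure-collider path (with at least one edge). -/
def ColliderConn (u v : V) : Prop :=
  ∃ w : G.Walk u v, 0 < w.length ∧ w.IsPureCollider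

/-- Vertices connected to `S` by a (possibly empty) path of bi-directed edges. -/
def district (S : Set V) : Set V :=
  {v | ∃ s ∈ S, Relation.ReflTransGen G.bi s v}

/-- Children of vertices in `S`. -/
def ch (S : Set V) : Set V := {v | ∃ a ∈ S, G.dir a v}

/-- Ancestors of `S` (including `S` itself). -/
def an (S : Set V) : Set V :=
  {v | ∃ s ∈ S, Relation.ReflTransGen G.dir v s}

/-- The subgraph induced by `W`: edges with both endpoints in `W`. -/
def induce (W : Set V) : MixedGraph V where
  dir a b := G.dir a b ∧ a ∈ W ∧ b ∈ W
  bi a b := G.bi a b ∧ a ∈ W ∧ b ∈ W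
  bi_symm h := ⟨G.bi_symm h.1, h.2.2, h.2.1⟩

/-- Separation in an undirected graph with adjacency `adj`: every path between
`A` and `B` intersects `C`, i.e. `B` is not reachable from `A` avoiding `C`. -/
def UndirSep (adj : V → V → Prop) (A B C : Set V) : Prop :=
  ∀ a ∈ A, ∀ b ∈ B, ¬ Relation.ReflTransGen (fun x y => adj x y ∧ y ∉ C) a b

inductive EdgeKind | fwd | bwd | bi
deriving DecidableEq

def Step.kind {G : MixedGraph V} : {a b : V} → G.Step a b → EdgeKind
  | _, _, .fwd _ => .fwd
  | _, _, .bwd _ => .bwd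
  | _, _, .bi _ => .bi

def Walk.kinds {G : MixedGraph V} : {a b : V} → G.Walk a b → List EdgeKind
  | _, _, .nil => []
  | _, _, .cons s w => s.kind :: w.kinds

end MixedGraph


/-!
On a pure-collider walk every edge other than the first and the last is bi-directed, so such a
walk is `a *→ m ↔ ⋯ ↔ m' ←* b`, where each end edge is directed away from its endpoint or
bi-directed (and a single edge may be of any type). Hence a vertex lies in
`district({b} ∪ ch(b))` exactly when it starts a pure-collider walk to `b` whose first edge has
an arrowhead at the start; splitting a walk from `a` after its first edge when that edge is
`a → x`, and at `a` otherwise, gives both directions.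
-/

namespace MixedGraph

variable {V : Type*} {G : MixedGraph V}

def Walk.ArrowAtStart : {a b : V} → G.Walk a b → Prop
  | _, _, .nil => True
  | _, _, .cons s _ => s.arrowAtStart

instance : Std.Symm G.bi := ⟨fun _ _ => G.bi_symm⟩

theorem subset_district (S : Set V) : S ⊆ G.district S :=
  fun s hs => ⟨s, hs, .refl⟩

theorem mem_district_of_reflTransGen {S : Set V} {u v : V}
    (huv : Relation.ReflTransGen G.bi u v) (hv : v ∈ G.district S) : u ∈ G.district S := by
  obtain ⟨s, hs, hsv⟩ := hv
  exact ⟨s, hs, hsv.trans (symm huv)⟩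

namespace Walk

theorem IsPureCollider.of_cons {a b c : V} {s : G.Step a b} {w : G.Walk b c}
    (h : (cons s w).IsPureCollider) : w.IsPureCollider ∧ w.ArrowAtStart := by
  cases w with
  | nil => exact ⟨trivial, trivial⟩
  | cons t w => exact ⟨h.2.2, h.2.1⟩

theorem IsPureCollider.cons {a b c : V} {s : G.Step a b} {w : G.Walk b c}
    (hs : s.arrowAtEnd) (hw : w.IsPureCollider) (hw' : w.ArrowAtStart) :
    (Walk.cons s w).IsPureCollider := by
  cases w with
  | nil => trivial
  | cons t w => exact ⟨hs, hw', hw⟩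

end Walk

/-- The walks in question are exactly `u ↔ ⋯ ↔ b` and `u ↔ ⋯ ↔ t ← b`. -/
theorem mem_district_self_union_ch_iff {u b : V} :
    u ∈ G.district ({b} ∪ G.ch {b}) ↔ ∃ w : G.Walk u b, w.IsPureCollider ∧ w.ArrowAtStart := by
  constructor
  · rintro ⟨t, ht, htu⟩
    replace htu := symm htu
    induction htu using Relation.ReflTransGen.head_induction_on with
    | refl =>
        rcases ht with rfl | ⟨_, rfl, hbt⟩
        · exact ⟨.nil, trivial, trivial⟩
        · exact ⟨.cons (.bwd hbt) .nil, trivial, trivial⟩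
    | head huu' _ ih =>
        obtain ⟨w, hw, hw'⟩ := ih
        exact ⟨.cons (.bi huu') w, hw.cons trivial hw', trivial⟩
  · rintro ⟨w, hw, hw'⟩
    induction w with
    | nil => exact subset_district _ (.inl rfl)
    | cons s w ih =>
        cases s with
        | fwd _ => exact hw'.elim
        | bi huu' => exact mem_district_of_reflTransGen (.single huu') (ih hw.of_cons.1 hw.of_cons.2)
        | bwd hbu =>
            cases w with
            | nil => exact subset_district _ (.inr ⟨_, rfl, hbu⟩)
            | cons => exact hw.1.elim

end MixedGraph

/-- `a` and `b` are connected by a pure-collider path iff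
`district({a} ∪ ch(a)) ∩ district({b} ∪ ch(b)) ≠ ∅`. -/
theorem stmt_3 {V : Type*} (G : MixedGraph V) (a b : V) :
    (∃ w : G.Walk a b, w.IsPureCollider) ↔
      (G.district ({a} ∪ G.ch {a}) ∩ G.district ({b} ∪ G.ch {b})).Nonempty := by
  constructor
  · rintro ⟨w, hw⟩
    have ha : a ∈ G.district ({a} ∪ G.ch {a}) := G.subset_district _ (.inl rfl)
    match w, hw with
    | .cons (.fwd hax) w, hw =>
        exact ⟨_, G.subset_district _ (.inr ⟨a, rfl, hax⟩),
          MixedGraph.mem_district_self_union_ch_iff.2 ⟨w, hw.of_cons⟩⟩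
    | .nil, hw | .cons (.bwd _) _, hw | .cons (.bi _) _, hw =>
        exact ⟨a, ha, MixedGraph.mem_district_self_union_ch_iff.2 ⟨_, hw, trivial⟩⟩
  · rintro ⟨v, ⟨s, hs, hsv⟩, hv⟩
    obtain ⟨w, hw, hw'⟩ :=
      MixedGraph.mem_district_self_union_ch_iff.1 (MixedGraph.mem_district_of_reflTransGen hsv hv)
    rcases hs with rfl | ⟨_, rfl, has⟩
    · exact ⟨w, hw⟩
    · exact ⟨.cons (.fwd has) w, hw.cons trivial hw'⟩
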